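/- arXiv:1211.0463 — 4 statements merged into one kernel-verified Lean document; each statement's English description precedes it below -/
import Mathlib

section
/- For every integer n ≥ 3, the cycle C_n satisfies ch_{σ*}^e(C_n) = 2; that is, 2 is the least integer k such that for every assignment to each edge e of C_n of a set L_e of k real numbers, there exist a linear order on the edges of C_n and a weighting w with w(e) ∈ L_e for every edge e whose induced sequence colouring of the vertices is proper. -/
/-!
Common definitions: sequence colourings induced by an edge weighting and a linear
order on the edge set of a finite simple graph.
-/

open Finset

variable {V : Type*}

/-- The list of edges incident to `v`, sorted in increasing order with respect to the
linear order `σ` on `E(G)`. -/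
noncomputable def incEdges [Fintype V] [DecidableEq V] (G : SimpleGraph V) [DecidableRel G.Adj]
    (σ : LinearOrder G.edgeSet) (v : V) : List G.edgeSet :=
  letI := σ
  ((Finset.univ : Finset G.edgeSet).filter (fun e : G.edgeSet => v ∈ (e : Sym2 V))).sort σ.le

/-- The induced sequence colouring: `c(v)` is the list of weights `w(e)` of the edges `e`
incident to `v`, written in increasing order of `e` with respect to `σ`. -/
noncomputable def seqColor [Fintype V] [DecidableEq V] (G : SimpleGraph V) [DecidableRel G.Adj]
    (σ : LinearOrder G.edgeSet) {α : Type*} (w : G.edgeSet → α) (v : V) : List α :=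
  (incEdges G σ v).map w

/-- The induced sequence colouring is proper: adjacent vertices receive distinct sequences. -/
def ProperSeq [Fintype V] [DecidableEq V] (G : SimpleGraph V) [DecidableRel G.Adj]
    (σ : LinearOrder G.edgeSet) (w : G.edgeSet → ℝ) : Prop :=
  ∀ u v : V, G.Adj u v → seqColor G σ w u ≠ seqColor G σ w v

/-- `cycleSeqListWeightable n k` : for every assignment to each edge of the cycle `C_n` of a
set of `k` real numbers, there exist a linear order on the edges and a weighting from the
sets whose induced sequence colouring of the vertices is proper. -/
def cycleSeqListWeightable (n k : ℕ) : Prop :=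
  ∀ L : (SimpleGraph.cycleGraph n).edgeSet → Finset ℝ, (∀ e, (L e).card = k) →
    ∃ (σ : LinearOrder (SimpleGraph.cycleGraph n).edgeSet)
      (w : (SimpleGraph.cycleGraph n).edgeSet → ℝ),
      (∀ e, w e ∈ L e) ∧ ProperSeq (SimpleGraph.cycleGraph n) σ w

/-
Constant weights give every vertex of a regular graph the same sequence `(c, …, c)`, so lists of
size `1` never suffice. For lists of size `2`, order the edges `eᵢ = {i, i + 1}` by index. Then
`c(v) = (w e_{v-1}, w e_v)` for `v ≠ 0` and `c(0) = (w e₀, w e_{n-1})`, and properness follows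
from `n - 1` inequalities between weights that form a path, which can be met greedily from
`2`-lists.
-/

open Finset SimpleGraph

theorem Finset.sort_pair {α : Type*} [DecidableEq α] (r : α → α → Prop) [DecidableRel r]
    [IsTrans α r] [Std.Antisymm r] [Std.Total r] {a b : α} (hab : r a b) (hne : a ≠ b) :
    sort {a, b} r = [a, b] := by
  rw [sort_insert r (by simpa using hab) (by simpa using hne), sort_singleton]

theorem exists_mem_and_succ_ne {α : Type*} (L : ℕ → Finset α) (hL : ∀ i, 1 < #(L i)) :
    ∃ a : ℕ → α, (∀ i, a i ∈ L i) ∧ ∀ i, a (i + 1) ≠ a i := by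
  choose next hnext using fun i x => exists_mem_ne (hL i) x
  obtain ⟨a₀, ha₀⟩ := card_pos.1 (zero_lt_one.trans (hL 0))
  refine ⟨fun i => Nat.rec a₀ (fun i x => next (i + 1) x) i, fun i => ?_, fun i => (hnext _ _).2⟩
  cases i with
  | zero => exact ha₀
  | succ i => exact (hnext _ _).1

section SeqColor

variable {V : Type*} [Fintype V] [DecidableEq V] (G : SimpleGraph V) [DecidableRel G.Adj]
  (σ : LinearOrder G.edgeSet)

theorem length_incEdges (v : V) : (incEdges G σ v).length = G.degree v := by
  rw [incEdges, length_sort, ← card_incidenceFinset_eq_degree, ← card_map (.subtype _)]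
  congr 1
  ext e
  simp [mem_incidenceFinset, incidenceSet, and_comm]

theorem seqColor_const {α : Type*} (c : α) (v : V) :
    seqColor G σ (fun _ => c) v = List.replicate (G.degree v) c := by
  rw [seqColor, List.map_const', length_incEdges]

theorem not_properSeq_const {d : ℕ} (hG : G.IsRegularOfDegree d) {u v : V} (huv : G.Adj u v)
    (c : ℝ) : ¬ ProperSeq G σ fun _ => c := fun h =>
  h u v huv (by rw [seqColor_const, seqColor_const, hG u, hG v])

end SeqColor

namespace SimpleGraph

variable {n : ℕ}

def cycleEdge (i : Fin (n + 3)) : (cycleGraph (n + 3)).edgeSet :=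
  ⟨s(i, i + 1), by simp [cycleGraph_adj]⟩

theorem mem_cycleEdge {v i : Fin (n + 3)} :
    v ∈ (cycleEdge i : Sym2 (Fin (n + 3))) ↔ i = v - 1 ∨ i = v := by
  rw [cycleEdge, Sym2.mem_iff, eq_sub_iff_add_eq, eq_comm, or_comm, @eq_comm _ v]

theorem cycleEdge_injective : Function.Injective (cycleEdge (n := n)) := by
  intro i j h
  rcases Sym2.eq_iff.1 (congrArg Subtype.val h) with ⟨h₁, -⟩ | ⟨h₁, h₂⟩
  · exact h₁
  · subst h₁
    rw [add_assoc, add_eq_left] at h₂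
    simp [Fin.ext_iff, Fin.val_add, Nat.mod_eq_of_lt (show 2 < n + 3 by omega)] at h₂

theorem cycleEdge_surjective : Function.Surjective (cycleEdge (n := n)) := by
  rintro ⟨e, he⟩
  induction e using Sym2.ind with
  | h u v =>
    rcases cycleGraph_adj.1 he with h | h
    · refine ⟨v, Subtype.ext ?_⟩
      simp [cycleEdge, ← h]
    · refine ⟨u, Subtype.ext ?_⟩
      simp [cycleEdge, ← h]

theorem filter_mem_cycleEdge (v : Fin (n + 3)) :
    ({e | v ∈ (e : Sym2 (Fin (n + 3)))} : Finset (cycleGraph (n + 3)).edgeSet) =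
      {cycleEdge (v - 1), cycleEdge v} := by
  ext e
  obtain ⟨i, rfl⟩ := cycleEdge_surjective e
  simp [mem_cycleEdge, cycleEdge_injective.eq_iff]

noncomputable def cycleEdgeEquiv : Fin (n + 3) ≃ (cycleGraph (n + 3)).edgeSet :=
  .ofBijective cycleEdge ⟨cycleEdge_injective, cycleEdge_surjective⟩

noncomputable abbrev cycleEdgeOrder : LinearOrder (cycleGraph (n + 3)).edgeSet :=
  LinearOrder.lift' cycleEdgeEquiv.symm cycleEdgeEquiv.symm.injective

@[simp]
theorem cycleEdgeEquiv_symm_cycleEdge (i : Fin (n + 3)) : cycleEdgeEquiv.symm (cycleEdge i) = i :=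
  Equiv.ofBijective_symm_apply_apply _ _ i

@[simp]
theorem cycleEdge_cycleEdgeEquiv_symm (e : (cycleGraph (n + 3)).edgeSet) :
    cycleEdge (cycleEdgeEquiv.symm e) = e :=
  Equiv.ofBijective_apply_symm_apply _ _ e

theorem cycleEdgeOrder_le {i j : Fin (n + 3)} :
    cycleEdgeOrder.le (cycleEdge i) (cycleEdge j) ↔ i ≤ j := by
  change cycleEdgeEquiv.symm (cycleEdge i) ≤ cycleEdgeEquiv.symm (cycleEdge j) ↔ i ≤ j
  rw [cycleEdgeEquiv_symm_cycleEdge, cycleEdgeEquiv_symm_cycleEdge]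

theorem incEdges_cycleEdgeOrder (v : Fin (n + 3)) :
    incEdges (cycleGraph (n + 3)) cycleEdgeOrder v =
      if v = 0 then [cycleEdge 0, cycleEdge (-1)] else [cycleEdge (v - 1), cycleEdge v] := by
  let := cycleEdgeOrder (n := n)
  rw [incEdges, filter_mem_cycleEdge]
  split_ifs with hv
  · subst hv
    rw [zero_sub, pair_comm]
    exact sort_pair _ (cycleEdgeOrder_le.2 (by simp))
      (cycleEdge_injective.ne (by simp))
  · exact sort_pair _ (cycleEdgeOrder_le.2 (Fin.sub_one_lt_iff.2 (Fin.pos_iff_ne_zero.2 hv)).le)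
      (cycleEdge_injective.ne (Fin.sub_one_lt_iff.2 (Fin.pos_iff_ne_zero.2 hv)).ne)

theorem seqColor_cycleEdgeOrder {α : Type*} (f : ℕ → α) (v : Fin (n + 3)) :
    seqColor (cycleGraph (n + 3)) cycleEdgeOrder (fun e => f (cycleEdgeEquiv.symm e)) v =
      if v = 0 then [f 0, f (n + 2)] else [f (v - 1), f v] := by
  rw [seqColor, incEdges_cycleEdgeOrder]
  split_ifs with hv <;> simp [Fin.coe_sub_one, hv]

theorem properSeq_cycleGraph_of_forall_ne_succ (σ : LinearOrder (cycleGraph (n + 2)).edgeSet)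
    {w : (cycleGraph (n + 2)).edgeSet → ℝ}
    (h : ∀ v, seqColor (cycleGraph (n + 2)) σ w v ≠ seqColor (cycleGraph (n + 2)) σ w (v + 1)) :
    ProperSeq (cycleGraph (n + 2)) σ w := by
  intro u v huv
  rcases cycleGraph_adj.1 huv with huv | huv <;> rw [sub_eq_iff_eq_add'] at huv <;> subst huv
  exacts [(h v).symm, h u]

-- Only vertex `0` reads its edges backwards, as `(e₀, e_{n+2})`; so a clash at `(v, v + 1)` forces
-- `f (v - 1) = f (v + 1)` when `v ∈ {0, n + 2}` and three equal consecutive weights otherwise.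
theorem properSeq_cycleEdgeOrder {f : ℕ → ℝ} (h₀ : f (n + 2) ≠ f 1) (h₁ : f (n + 1) ≠ f 0)
    (h : ∀ k, 1 ≤ k → k ≤ n + 1 → f (k - 1) ≠ f k ∨ f k ≠ f (k + 1)) :
    ProperSeq (cycleGraph (n + 3)) cycleEdgeOrder (fun e => f (cycleEdgeEquiv.symm e)) := by
  refine properSeq_cycleGraph_of_forall_ne_succ _ fun v => ?_
  rw [seqColor_cycleEdgeOrder, seqColor_cycleEdgeOrder]
  rcases eq_or_ne v 0 with rfl | hv₀
  · simpa using h₀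
  rcases eq_or_ne v (-1) with rfl | hv₁
  · simpa [Fin.ext_iff] using h₁
  have hval : ((v + 1 : Fin (n + 3)) : ℕ) = v + 1 := by
    rw [Fin.val_add_one, if_neg (by simpa [Fin.ext_iff] using hv₁)]
  have hv : 1 ≤ (v : ℕ) ∧ (v : ℕ) ≤ n + 1 := by
    have := v.isLt
    simp only [Ne, Fin.ext_iff, Fin.val_zero, Fin.coe_neg_one] at hv₀ hv₁
    omega
  rw [if_neg hv₀, if_neg (by rwa [add_eq_zero_iff_eq_neg]), hval, Nat.add_sub_cancel]
  simpa [or_iff_not_imp_left] using h v hv.1 hv.2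

-- The required inequalities form the path `f (n + 2), f 1, f 2, …, f (n + 1), f 0`, i.e. the
-- natural order after swapping `0` and `n + 2`; so greedy choices along it succeed.
theorem exists_cycle_weights {α : Type*} (L : ℕ → Finset α) (hL : ∀ k, 1 < #(L k)) :
    ∃ f : ℕ → α, (∀ k, f k ∈ L k) ∧ f (n + 2) ≠ f 1 ∧ f (n + 1) ≠ f 0 ∧
      ∀ k, 1 ≤ k → k ≤ n + 1 → f (k - 1) ≠ f k ∨ f k ≠ f (k + 1) := by
  set π := Equiv.swap 0 (n + 2)
  obtain ⟨a, haL, ha⟩ := exists_mem_and_succ_ne (fun k => L (π k)) fun k => hL _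
  have hne {i j : ℕ} (h : j = i + 1 ∨ i = j + 1) : a i ≠ a j := by
    rcases h with rfl | rfl
    exacts [(ha i).symm, ha j]
  refine ⟨fun k => a (π k), fun k => by simpa only [π, Equiv.swap_apply_self] using haL (π k),
    hne ?_, hne ?_, fun k hk₁ hk₂ => ?_⟩
  · simp [π, Equiv.swap_apply_def]
  · simp [π, Equiv.swap_apply_def]
  · refine if hk : k ≤ n then .inr (hne ?_) else .inl (hne ?_) <;>
      simp only [π, Equiv.swap_apply_def] <;> split_ifs <;> first | omega | contradiction

end SimpleGraph

open Fin.NatCast in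
theorem cycleSeqListWeightable_two (n : ℕ) : cycleSeqListWeightable (n + 3) 2 := by
  intro L hL
  obtain ⟨f, hfL, h₀, h₁, h⟩ :=
    exists_cycle_weights (n := n) (fun k : ℕ => L (cycleEdge (k : Fin (n + 3)))) fun _ => by
      simp [hL]
  exact ⟨cycleEdgeOrder, fun e => f (cycleEdgeEquiv.symm e),
    fun e => by simpa using hfL (cycleEdgeEquiv.symm e), properSeq_cycleEdgeOrder h₀ h₁ h⟩

theorem not_cycleSeqListWeightable_of_lt_two (n : ℕ) {k : ℕ} (hk : k < 2) :
    ¬ cycleSeqListWeightable (n + 3) k := by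
  intro h
  obtain ⟨σ, w, hwL, hw⟩ := h (fun _ => (range k).map Nat.castEmbedding) fun _ => by simp
  have hw0 : w = fun _ => 0 := by
    funext e
    obtain ⟨j, hj, hje⟩ := by simpa using hwL e
    rw [← hje, show j = 0 by omega, Nat.cast_zero]
  exact not_properSeq_const _ σ (d := 2) (fun _ => cycleGraph_degree_three_le)
    (show (cycleGraph (n + 3)).Adj 0 1 by simp [cycleGraph_adj]) 0 (hw0 ▸ hw)

/-- For every `n ≥ 3`, `ch_{σ*}^e(C_n) = 2`. -/
theorem stmt_0 (n : ℕ) (hn : 3 ≤ n) :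
    IsLeast {k : ℕ | cycleSeqListWeightable n k} 2 := by
  obtain ⟨n, rfl⟩ : ∃ m, n = m + 3 := ⟨n - 3, by omega⟩
  exact ⟨cycleSeqListWeightable_two n, fun k hk => not_lt.1 fun hlt =>
    not_cycleSeqListWeightable_of_lt_two n hlt hk⟩
end

section
/- For every finite simple graph G, ch_{σ*}^t(G) ≤ 2: for every assignment to each vertex and each edge of G of a set of two real numbers, there exist a linear order on the disjoint union V(G) ∪ E(G) and a total weighting w taking each vertex's and edge's weight from its assigned set, such that the induced total sequence colouring of the vertices is proper. -/
/-!
Common definitions: total sequence colourings induced by a total weighting and a linear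
order on the disjoint union `V(G) ⊕ E(G)` of a finite simple graph.
-/

open Finset

variable {V : Type*}

/-- The elements of `V(G) ⊕ E(G)` relevant to the vertex `v` (namely `v` itself together
with the edges incident to `v`), sorted in increasing order with respect to the linear
order `σ` on `V(G) ⊕ E(G)`. -/
noncomputable def incTotal [Fintype V] [DecidableEq V] (G : SimpleGraph V) [DecidableRel G.Adj]
    (σ : LinearOrder (V ⊕ G.edgeSet)) (v : V) : List (V ⊕ G.edgeSet) :=
  letI := σ
  letI : DecidablePred (fun x : V ⊕ G.edgeSet =>
      Sum.elim (fun u : V => u = v) (fun e : G.edgeSet => v ∈ (e : Sym2 V)) x) :=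
    Classical.decPred _
  ((Finset.univ : Finset (V ⊕ G.edgeSet)).filter
    (fun x : V ⊕ G.edgeSet =>
      Sum.elim (fun u : V => u = v) (fun e : G.edgeSet => v ∈ (e : Sym2 V)) x)).sort σ.le

/-- The induced total sequence colouring: `c(v)` consists of `w(v)` together with the
weights `w(e)` of the edges `e` incident to `v`, all written in increasing order with
respect to `σ`. -/
noncomputable def totalSeqColor [Fintype V] [DecidableEq V] (G : SimpleGraph V)
    [DecidableRel G.Adj] (σ : LinearOrder (V ⊕ G.edgeSet)) (w : V ⊕ G.edgeSet → ℝ) (v : V) :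
    List ℝ :=
  (incTotal G σ v).map w

/-- The induced total sequence colouring is proper: adjacent vertices receive distinct
sequences. -/
def ProperTotalSeq [Fintype V] [DecidableEq V] (G : SimpleGraph V) [DecidableRel G.Adj]
    (σ : LinearOrder (V ⊕ G.edgeSet)) (w : V ⊕ G.edgeSet → ℝ) : Prop :=
  ∀ u v : V, G.Adj u v → totalSeqColor G σ w u ≠ totalSeqColor G σ w v

/-!
Fix the weights of the edges and an order of `E(G)` once and for all. The vertex `v` occurs only
in its own sequence `c(v)`, so what remains free at `v` is its weight, one of two values, and the
position among the `d(v)` edges at `v` at which it is inserted. These give at least `d(v) + 1`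
distinct candidate sequences, so a greedy list colouring picks one candidate per vertex with
distinct choices at adjacent vertices. A single linear order of `V(G) ∪ E(G)` realises all the
chosen positions simultaneously: each vertex has to be placed correctly only relative to its own
edges.
-/

open Finset

namespace List

variable {α : Type*}

def insertions [DecidableEq α] (l : List α) (s : Finset α) : Finset (List α) :=
  (Finset.range (l.length + 1) ×ˢ s).image fun pt => l.take pt.1 ++ pt.2 :: l.drop pt.1

theorem length_lt_card_insertions [DecidableEq α] (l : List α) {s : Finset α}
    (hs : 1 < #s) : l.length < #(l.insertions s) := by
  obtain ⟨a, ha, b, hb, hab⟩ := one_lt_card.mp hs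
  -- Inserting at `p` a value other than `l[p]` makes the `p`-th list the first one to differ
  -- from `l` at index `p`, so the lists for `p = 0, …, l.length` are distinct.
  let t : ℕ → α := fun p => if l[p]? = some a then b else a
  have ht : ∀ p, l[p]? ≠ some (t p) := by
    intro p h
    by_cases hp : l[p]? = some a <;> simp [t, hp] at h
    exact hab h
  let f : ℕ → List α := fun p => l.take p ++ t p :: l.drop p
  have hf : Set.InjOn f (Finset.range (l.length + 1)) := by
    suffices ∀ p q, p < q → q ≤ l.length → f p ≠ f q by
      intro p hp q hq hpq
      simp only [coe_range, Set.mem_Iio] at hp hq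
      rcases lt_trichotomy p q with h | h | h
      exacts [absurd hpq (this p q h (by omega)), h, absurd hpq.symm (this q p h (by omega))]
    intro p q hpq hq hfpq
    have hp_f : (f p)[p]? = some (t p) := by simp [f, Nat.min_eq_left (by omega : p ≤ l.length)]
    have hq_f : (f q)[p]? = l[p]? := by
      rw [getElem?_append_left (by simp; omega), getElem?_take_of_lt hpq]
    exact ht p (hq_f ▸ hfpq ▸ hp_f)
  calc l.length < #((Finset.range (l.length + 1)).image f) := by
        rw [card_image_of_injOn hf, card_range]; omega
    _ ≤ #(l.insertions s) := by
        refine card_le_card fun x hx => ?_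
        obtain ⟨p, hp, rfl⟩ := mem_image.mp hx
        refine mem_image.mpr ⟨(p, t p), Finset.mem_product.mpr ⟨hp, ?_⟩, rfl⟩
        by_cases h : l[p]? = some a <;> simp [t, h, ha, hb]

theorem Pairwise.exists_separator_take_drop {r : α → ℕ} {l : List α}
    (hl : l.Pairwise (r · < r ·)) (p : ℕ) :
    ∃ m, (∀ x ∈ l.take p, r x < m) ∧ ∀ x ∈ l.drop p, m ≤ r x := by
  rw [← l.take_append_drop p, pairwise_append] at hl
  obtain ⟨-, hdrop, hcross⟩ := hl
  cases h : l.drop p with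
  | nil =>
    refine ⟨(l.map r).sum + 1, fun x hx => Nat.lt_succ_of_le ?_, by simp⟩
    exact le_sum_of_mem (mem_map_of_mem (take_subset p l hx))
  | cons y ys =>
    rw [h, pairwise_cons] at hdrop
    refine ⟨r y, fun x hx => hcross x hx y (by simp [h]), fun x hx => ?_⟩
    rcases mem_cons.mp hx with rfl | hx
    exacts [le_rfl, (hdrop.1 x hx).le]

end List

namespace SimpleGraph

variable [Fintype V] [DecidableEq V] (G : SimpleGraph V) [DecidableRel G.Adj]

theorem exists_coloring_mem_of_degree_lt_card {C : Type*} [DecidableEq C] (S : V → Finset C)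
    (hS : ∀ v, G.degree v < #(S v)) : ∃ c : G.Coloring C, ∀ v, c v ∈ S v := by
  suffices ∀ s : Finset V, ∃ c : V → C, (∀ v, c v ∈ S v) ∧
      ∀ u ∈ s, ∀ v ∈ s, G.Adj u v → c u ≠ c v by
    obtain ⟨c, hcS, hc⟩ := this univ
    exact ⟨Coloring.mk c fun huv => hc _ (mem_univ _) _ (mem_univ _) huv, hcS⟩
  intro s
  induction s using Finset.induction_on with
  | empty =>
    choose c hc using fun v => card_pos.mp (Nat.zero_lt_of_lt (hS v))
    exact ⟨c, hc, by simp⟩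
  | insert v s hv ih =>
    obtain ⟨c, hcS, hc⟩ := ih
    obtain ⟨x, hxS, hx⟩ := exists_mem_notMem_of_card_lt_card
      (card_image_le.trans_lt (hS v) : #((G.neighborFinset v).image c) < #(S v))
    have hfresh : ∀ u, G.Adj v u → c u ≠ x := fun u hu h =>
      hx (mem_image.mpr ⟨u, (mem_neighborFinset G v u).mpr hu, h⟩)
    refine ⟨Function.update c v x, fun u => ?_, ?_⟩
    · by_cases hu : u = v
      · subst hu; simpa using hxS
      · simpa [hu] using hcS u
    · intro u hu w hw huw
      rcases mem_insert.mp hu with rfl | hu <;> rcases mem_insert.mp hw with rfl | hw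
      · exact absurd huw (G.loopless.irrefl _)
      · simpa [huw.ne'] using (hfresh w huw).symm
      · simpa [huw.ne] using hfresh u huw.symm
      · simpa [huw.ne, ne_of_mem_of_not_mem hu hv, ne_of_mem_of_not_mem hw hv] using
          hc u hu w hw huw

noncomputable def edgeRank (e : G.edgeSet) : ℕ := Fintype.equivFin G.edgeSet e

noncomputable def incidentEdges (v : V) : List G.edgeSet :=
  ((List.finRange _).map (Fintype.equivFin G.edgeSet).symm).filter (v ∈ ·.1)

theorem pairwise_incidentEdges (v : V) :
    (G.incidentEdges v).Pairwise (G.edgeRank · < G.edgeRank ·) := by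
  refine List.Pairwise.filter _ (List.pairwise_map.mpr ?_)
  simpa [edgeRank] using List.pairwise_lt_finRange _

theorem mem_incidentEdges {v : V} {e : G.edgeSet} :
    e ∈ G.incidentEdges v ↔ v ∈ (e : Sym2 V) := by
  simp [incidentEdges, Equiv.symm_apply_eq]

theorem length_incidentEdges (v : V) : (G.incidentEdges v).length = G.degree v := by
  have hnodup : (G.incidentEdges v).Nodup :=
    ((List.nodup_finRange _).map (Fintype.equivFin _).symm.injective).filter _
  rw [← List.toFinset_card_of_nodup hnodup, ← G.card_incidenceFinset_eq_degree,
    ← card_map (Function.Embedding.subtype _)]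
  congr 1
  ext e
  simp [mem_incidentEdges, incidenceSet, and_comm]

end SimpleGraph

section TotalOrder

variable [Fintype V] [DecidableEq V] (G : SimpleGraph V) [DecidableRel G.Adj]

theorem incTotal_eq_of_pairwise (σ : LinearOrder (V ⊕ G.edgeSet)) (v : V)
    (l : List (V ⊕ G.edgeSet)) (hmem : ∀ x, x ∈ l ↔ Sum.elim (· = v) (v ∈ ·.1) x)
    (hl : l.Pairwise σ.lt) : incTotal G σ v = l := by
  let := σ
  unfold incTotal
  convert (List.toFinset_sort (· ≤ ·) (hl.imp ne_of_lt)).mpr (hl.imp le_of_lt) using 2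
  ext x
  simp [hmem]

theorem exists_linearOrder_incTotal_eq (p : V → ℕ) :
    ∃ σ : LinearOrder (V ⊕ G.edgeSet), ∀ v, incTotal G σ v =
      ((G.incidentEdges v).map .inr).take (p v) ++
        .inl v :: ((G.incidentEdges v).map .inr).drop (p v) := by
  choose m hm using fun v => (G.pairwise_incidentEdges v).exists_separator_take_drop (p v)
  -- Edges get the odd primary key `2 r + 1`, the vertex `v` the even one `2 m v`, which lies
  -- between the ranks of its first `p v` edges and the others; the secondary key separates
  -- vertices.
  let rank : V ⊕ G.edgeSet → ℕ × ℕ :=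
    Sum.elim (fun v => (2 * m v, Fintype.equivFin V v)) (fun e => (2 * G.edgeRank e + 1, 0))
  let key : V ⊕ G.edgeSet → ℕ ×ₗ ℕ := toLex ∘ rank
  have hkey : Function.Injective key := by
    rintro (u | e) (v | f) h <;> simp [key, rank, Prod.ext_iff] at h
    · exact congrArg _ ((Fintype.equivFin V).injective (Fin.ext h.2))
    · omega
    · omega
    · have : G.edgeRank e = G.edgeRank f := by omega
      exact congrArg _ ((Fintype.equivFin _).injective (Fin.ext this))
  have key_lt : ∀ x y, (rank x).1 < (rank y).1 → key x < key y := fun x y h =>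
    Prod.Lex.toLex_lt_toLex.mpr (Or.inl h)
  refine ⟨LinearOrder.lift' key hkey, fun v => incTotal_eq_of_pairwise G _ v _ ?_ ?_⟩
  · intro x
    rw [List.perm_middle.mem_iff, List.mem_cons, List.take_append_drop]
    rcases x with u | e <;> simp [SimpleGraph.mem_incidentEdges, eq_comm]
  · obtain ⟨hbelow, habove⟩ := hm v
    have hedges : (G.incidentEdges v).Pairwise fun e f => key (.inr e) < key (.inr f) :=
      (G.pairwise_incidentEdges v).imp fun h => key_lt _ _ (by simp [rank]; omega)
    rw [← List.take_append_drop (p v) (G.incidentEdges v), List.pairwise_append] at hedges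
    rw [← List.map_take, ← List.map_drop, List.pairwise_append, List.pairwise_cons]
    refine ⟨List.pairwise_map.mpr hedges.1, ⟨?_, List.pairwise_map.mpr hedges.2.1⟩, ?_⟩
    · simp only [List.mem_map]
      rintro _ ⟨e, he, rfl⟩
      exact key_lt _ _ (by have := habove e he; simp [rank]; omega)
    · simp only [List.mem_map, List.mem_cons]
      rintro _ ⟨e, he, rfl⟩ _ (rfl | ⟨f, hf, rfl⟩)
      · exact key_lt _ _ (by have := hbelow e he; simp [rank]; omega)
      · exact hedges.2.2 e he f hf

end TotalOrder

/-- For every graph `G`, `ch_{σ*}^t(G) ≤ 2`: for every assignment of two-element sets of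
reals to the vertices and edges, there exist a linear order on `V(G) ⊕ E(G)` and a total
weighting from the sets whose induced total sequence colouring is proper. -/
theorem stmt_3 [Fintype V] [DecidableEq V] (G : SimpleGraph V) [DecidableRel G.Adj]
    (L : V ⊕ G.edgeSet → Finset ℝ) (hL : ∀ x, (L x).card = 2) :
    ∃ (σ : LinearOrder (V ⊕ G.edgeSet)) (w : V ⊕ G.edgeSet → ℝ),
      (∀ x, w x ∈ L x) ∧ ProperTotalSeq G σ w := by
  classical
  choose w₀ hw₀ using fun x => card_pos.mp (by rw [hL x]; norm_num : 0 < #(L x))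
  let edgeWeights v := (G.incidentEdges v).map (w₀ ∘ Sum.inr)
  obtain ⟨c, hc⟩ := G.exists_coloring_mem_of_degree_lt_card
    (fun v => (edgeWeights v).insertions (L (.inl v))) fun v => by
      simpa [edgeWeights, SimpleGraph.length_incidentEdges] using
        (edgeWeights v).length_lt_card_insertions (s := L (.inl v)) (by rw [hL]; norm_num)
  choose pt hpt hc_eq using fun v => mem_image.mp (hc v)
  obtain ⟨σ, hσ⟩ := exists_linearOrder_incTotal_eq G fun v => (pt v).1
  let w : V ⊕ G.edgeSet → ℝ := Sum.elim (fun v => (pt v).2) (w₀ ∘ Sum.inr)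
  have hcolor : ∀ v, totalSeqColor G σ w v = c v := fun v => by
    simp [totalSeqColor, hσ, ← hc_eq, edgeWeights, w]
  refine ⟨σ, w, ?_, fun u v huv => hcolor u ▸ hcolor v ▸ c.valid huv⟩
  rintro (v | e)
  exacts [(mem_product.mp (hpt v)).2, hw₀ _]
end

section
/- For every finite simple graph G, χ_σ^t(G) ≤ 3: for every linear order on the disjoint union V(G) ∪ E(G) there exists a total weighting w : V(G) ∪ E(G) → {1,2,3} whose induced total sequence colouring of the vertices is proper. -/
/-!
Since `c(v)` has length `deg v + 1`, only adjacent vertices `u, v` of equal degree can clash;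
list such a pair with its `σ`-smaller vertex `u` first. At every vertex `u`, the edges `uv` with
`u <σ v` can be sent injectively and without fixed points into `{u} ∪ {those edges}`, and these
sets are disjoint for distinct `u`. This assigns to each clashing pair `(u, v)` its own element
`r` of the list of `u` that is not in the list of `v`, hence a partner `g r ≠ r` at the same
position in the list of `v`; it suffices that `w r ≠ w (g r)` for every such `r`. The constraint
graph of a map `g` is 3-colourable, because some vertex has at most one `g`-preimage.
-/

open Finset

variable {V : Type*}

section

variable {α : Type*} [DecidableEq α]

theorem exists_fin3_coloring_of_mapsTo (g : α → α) (s : Finset α) (hg : ∀ x ∈ s, g x ∈ s) :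
    ∃ f : α → Fin 3, ∀ x ∈ s, g x ≠ x → f x ≠ f (g x) := by
  induction s using Finset.strongInduction generalizing g with
  | H s ih =>
  rcases s.eq_empty_or_nonempty with rfl | hs
  · exact ⟨0, by simp⟩
  -- some `x₀` has at most one `g`-preimage in `s`; delete it and cut the edge into it
  obtain ⟨x₀, hx₀, hfib⟩ : ∃ x₀ ∈ s, #{y ∈ s | g y = x₀} ≤ 1 :=
    exists_card_fiber_le_of_card_le_mul hs (by rw [mul_one])
  set g' : α → α := fun y => if g y = x₀ then y else g y
  have hg' : ∀ y ∈ s.erase x₀, g' y ∈ s.erase x₀ := by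
    intro y hy
    by_cases hy₀ : g y = x₀
    · simpa [g', hy₀] using hy
    · simpa [g', hy₀] using hg y (mem_of_mem_erase hy)
  obtain ⟨f, hf⟩ := ih _ (erase_ssubset hx₀) g' hg'
  have hforbid : #(insert (f (g x₀)) ({y ∈ s | g y = x₀}.image f)) < #(univ : Finset (Fin 3)) :=
    calc _ ≤ #({y ∈ s | g y = x₀}.image f) + 1 := card_insert_le _ _
      _ ≤ 1 + 1 := by gcongr; exact card_image_le.trans hfib
      _ < _ := by simp
  obtain ⟨c, -, hc⟩ := exists_mem_notMem_of_card_lt_card hforbid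
  rw [mem_insert, not_or, mem_image, not_exists] at hc
  refine ⟨Function.update f x₀ c, fun x hx hgx => ?_⟩
  by_cases hxx₀ : x = x₀
  · subst hxx₀
    simpa [Function.update_of_ne hgx] using hc.1
  by_cases hgx₀ : g x = x₀
  · simpa [hxx₀, hgx₀, hx, eq_comm] using hc.2 x
  simpa [hxx₀, hgx₀, g'] using hf x (mem_erase.2 ⟨hxx₀, hx⟩) (by simpa [g', hgx₀] using hgx)

theorem exists_injOn_insert_ne (a : α) (s : Finset α) (ha : a ∉ s) :
    ∃ f : α → α, Set.InjOn f s ∧ ∀ x ∈ s, f x ∈ insert a s ∧ f x ≠ x := by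
  induction s using Finset.induction_on generalizing a with
  | empty => exact ⟨id, by simp⟩
  | insert b s hb ih =>
    obtain ⟨f, hinj, hf⟩ := ih b hb
    have hab : a ≠ b := fun h => ha (h ▸ mem_insert_self b s)
    have hfa : ∀ x ∈ s, f x ≠ a := fun x hx h => ha (h ▸ (hf x hx).1)
    refine ⟨Function.update f b a, ?_, ?_⟩
    · have hupd : ∀ x ∈ s, Function.update f b a x = f x :=
        fun x hx => Function.update_of_ne (ne_of_mem_of_not_mem hx hb) _ _
      rw [coe_insert, Set.injOn_insert (mod_cast hb)]
      refine ⟨fun x hx y hy hxy => hinj hx hy (by rwa [hupd x hx, hupd y hy] at hxy), ?_⟩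
      rintro ⟨x, hx, hxa⟩
      simp only [Function.update_self, hupd x hx] at hxa
      exact hfa x hx hxa
    · intro x hx
      rcases mem_insert.1 hx with rfl | hx
      · simp [hab]
      · have hxb := ne_of_mem_of_not_mem hx hb
        simp only [Function.update_of_ne hxb]
        exact ⟨mem_insert_of_mem (hf x hx).1, (hf x hx).2⟩

end

theorem exists_fin3_map_ne_of_injective {ι β : Type*} [Fintype β] (a b : ι → List β)
    (r : ι → β) (hr : Function.Injective r) (hlen : ∀ i, (a i).length = (b i).length)
    (hmem : ∀ i, r i ∈ a i) (hnot : ∀ i, r i ∉ b i) :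
    ∃ f : β → Fin 3, ∀ i, (a i).map f ≠ (b i).map f := by
  classical
  let partner (i : ι) : β := (b i).getD ((a i).idxOf (r i)) (r i)
  let g (x : β) : β := if h : ∃ i, r i = x then partner h.choose else x
  have hg : ∀ i, g (r i) = partner i := fun i => by
    have h : ∃ j, r j = r i := ⟨i, rfl⟩
    simp only [g, dif_pos h, hr h.choose_spec]
  obtain ⟨f, hf⟩ := exists_fin3_coloring_of_mapsTo g univ (fun _ _ => mem_univ _)
  refine ⟨f, fun i hi => ?_⟩
  have hk : (a i).idxOf (r i) < (a i).length := List.idxOf_lt_length_of_mem (hmem i)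
  have hk' : (a i).idxOf (r i) < (b i).length := hlen i ▸ hk
  have hpartner : partner i = (b i)[(a i).idxOf (r i)] := by simp [partner, hk']
  have hfi := congrArg (·[(a i).idxOf (r i)]?) hi
  simp only [List.getElem?_map, List.getElem?_eq_getElem hk, List.getElem?_eq_getElem hk',
    List.getElem_idxOf hk, Option.map_some, Option.some.injEq] at hfi
  refine hf (r i) (mem_univ _) ?_ ?_
  · rw [hg, hpartner]
    exact fun h => hnot i (h ▸ List.getElem_mem hk')
  · rw [hg, hpartner, hfi]

section Graph

variable [Fintype V] [DecidableEq V] (G : SimpleGraph V) [DecidableRel G.Adj]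
  (σ : LinearOrder (V ⊕ G.edgeSet))

theorem mem_incTotal {v : V} {x : V ⊕ G.edgeSet} :
    x ∈ incTotal G σ v ↔ Sum.elim (· = v) (fun e : G.edgeSet => v ∈ (e : Sym2 V)) x := by
  let _ := σ
  simp [incTotal]

theorem length_incTotal (v : V) : (incTotal G σ v).length = G.degree v + 1 := by
  let _ := σ
  classical
  have hedges : #{e : G.edgeSet | v ∈ (e : Sym2 V)} = G.degree v := by
    rw [← G.card_incidenceFinset_eq_degree, ← card_map (Function.Embedding.subtype _)]
    congr 1
    ext e
    simp [SimpleGraph.incidenceSet, and_comm]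
  have hsplit : ({x | Sum.elim (· = v) (fun e : G.edgeSet => v ∈ (e : Sym2 V)) x} : Finset _)
      = insert (Sum.inl v) (({e : G.edgeSet | v ∈ (e : Sym2 V)} : Finset _).map .inr) := by
    ext (w | e) <;> simp
  rw [incTotal, length_sort, filter_congr_decidable, hsplit, card_insert_of_notMem (by simp),
    card_map, hedges]

theorem eq_edge_of_mem_incTotal {u v : V} (huv : G.Adj u v) {x : V ⊕ G.edgeSet}
    (hu : x ∈ incTotal G σ u) (hv : x ∈ incTotal G σ v) : x = Sum.inr ⟨s(u, v), huv⟩ := by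
  rw [mem_incTotal] at hu hv
  rcases x with w | e
  · exact absurd (hu.symm.trans hv) huv.ne
  · exact congrArg _ (Subtype.ext ((Sym2.mem_and_mem_iff huv.ne).1 ⟨hu, hv⟩))

theorem degree_eq_of_totalSeqColor_eq {w : V ⊕ G.edgeSet → ℝ} {u v : V}
    (h : totalSeqColor G σ w u = totalSeqColor G σ w v) : G.degree u = G.degree v := by
  simpa [totalSeqColor, length_incTotal] using congrArg List.length h

def outEdges (u : V) : Finset (V ⊕ G.edgeSet) :=
  let _ := σ
  ({e : G.edgeSet | ∃ v, (e : Sym2 V) = s(u, v) ∧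
    (Sum.inl u : V ⊕ G.edgeSet) < Sum.inl v} : Finset _).map .inr

theorem inl_notMem_outEdges (u : V) : Sum.inl u ∉ outEdges G σ u := by
  simp [outEdges]

theorem edge_mem_outEdges {u v : V} (huv : G.Adj u v) (hlt : σ.lt (Sum.inl u) (Sum.inl v)) :
    Sum.inr ⟨s(u, v), huv⟩ ∈ outEdges G σ u := by
  simp only [outEdges, mem_map, mem_filter, mem_univ, true_and]
  exact ⟨_, ⟨v, rfl, hlt⟩, rfl⟩

theorem mem_incTotal_of_mem_insert_outEdges {u : V} {x : V ⊕ G.edgeSet}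
    (hx : x ∈ insert (Sum.inl u) (outEdges G σ u)) : x ∈ incTotal G σ u := by
  rw [mem_incTotal]
  rcases mem_insert.1 hx with rfl | hx
  · rfl
  · obtain ⟨v, -, -, rfl⟩ := by simpa [outEdges] using hx
    simp

theorem disjoint_insert_outEdges {u u' : V} (h : u ≠ u') :
    Disjoint (insert (Sum.inl u) (outEdges G σ u)) (insert (Sum.inl u') (outEdges G σ u')) := by
  let _ := σ
  rw [disjoint_left]
  rintro (w | e) hu hu'
  · simp_all [outEdges]
  · obtain ⟨v, he, hlt⟩ := by simpa [outEdges] using hu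
    obtain ⟨v', he', hlt'⟩ := by simpa [outEdges] using hu'
    rcases Sym2.eq_iff.1 (he.symm.trans he') with ⟨rfl, -⟩ | ⟨rfl, rfl⟩
    · exact h rfl
    · exact lt_asymm hlt hlt'

def ConflictPair : Type _ :=
  {p : V × V // G.Adj p.1 p.2 ∧ G.degree p.1 = G.degree p.2 ∧ σ.lt (Sum.inl p.1) (Sum.inl p.2)}

theorem exists_injective_conflictPair_rep :
    ∃ r : ConflictPair G σ → V ⊕ G.edgeSet, Function.Injective r ∧
      ∀ p, r p ∈ incTotal G σ p.1.1 ∧ r p ∉ incTotal G σ p.1.2 := by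
  choose F hFinj hF using fun u => exists_injOn_insert_ne (Sum.inl u) (outEdges G σ u)
    (inl_notMem_outEdges G σ u)
  let edge (p : ConflictPair G σ) : V ⊕ G.edgeSet := Sum.inr ⟨s(p.1.1, p.1.2), p.2.1⟩
  have hedge (p : ConflictPair G σ) : edge p ∈ outEdges G σ p.1.1 :=
    edge_mem_outEdges G σ p.2.1 p.2.2.2
  refine ⟨fun p => F p.1.1 (edge p), fun p q (hpq : F p.1.1 (edge p) = F q.1.1 (edge q)) => ?_,
    fun p => ?_⟩
  · have hu : p.1.1 = q.1.1 := by
      by_contra h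
      have hq := (hF q.1.1 _ (hedge q)).1
      rw [← hpq] at hq
      exact disjoint_left.1 (disjoint_insert_outEdges G σ h) (hF p.1.1 _ (hedge p)).1 hq
    rw [← hu] at hpq
    have hpq' : edge p = edge q := hFinj p.1.1 (hedge p) (hu ▸ hedge q) hpq
    have hv : p.1.2 = q.1.2 := by
      have hs : s(p.1.1, p.1.2) = s(q.1.1, q.1.2) :=
        congrArg Subtype.val (Sum.inr_injective hpq')
      rwa [hu, Sym2.congr_right] at hs
    exact Subtype.ext (Prod.ext hu hv)
  · have hmem := mem_incTotal_of_mem_insert_outEdges G σ (hF _ _ (hedge p)).1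
    exact ⟨hmem, fun h => (hF _ _ (hedge p)).2 (eq_edge_of_mem_incTotal G σ p.2.1 hmem h)⟩

end Graph

/-- For every graph `G`, `χ_σ^t(G) ≤ 3`: for every linear order on `V(G) ⊕ E(G)` there is
a total weighting with weights in `{1,2,3}` whose induced total sequence colouring is
proper. -/
theorem stmt_5 [Fintype V] [DecidableEq V] (G : SimpleGraph V) [DecidableRel G.Adj]
    (σ : LinearOrder (V ⊕ G.edgeSet)) :
    ∃ w : V ⊕ G.edgeSet → ℝ, (∀ x, w x ∈ ({1, 2, 3} : Set ℝ)) ∧ ProperTotalSeq G σ w := by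
  obtain ⟨r, hr, hrep⟩ := exists_injective_conflictPair_rep G σ
  obtain ⟨f, hf⟩ := exists_fin3_map_ne_of_injective (fun p : ConflictPair G σ => incTotal G σ p.1.1)
    (fun p => incTotal G σ p.1.2) r hr (fun p => by simp [length_incTotal, p.2.2.1])
    (fun p => (hrep p).1) (fun p => (hrep p).2)
  let weight (c : Fin 3) : ℝ := (c : ℕ) + 1
  have hweight : Function.Injective weight := fun a b h => by
    simpa [weight, Fin.val_inj] using h
  have hweight_mem (c : Fin 3) : weight c ∈ ({1, 2, 3} : Set ℝ) := by
    fin_cases c <;> norm_num [weight]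
  refine ⟨weight ∘ f, fun x => hweight_mem (f x), ?_⟩
  have hlt : ∀ u v, G.Adj u v → σ.lt (Sum.inl u) (Sum.inl v) →
      totalSeqColor G σ (weight ∘ f) u ≠ totalSeqColor G σ (weight ∘ f) v := by
    intro u v huv hlt h
    refine hf ⟨(u, v), huv, degree_eq_of_totalSeqColor_eq G σ h, hlt⟩ ?_
    exact List.map_injective_iff.2 hweight (by simpa [totalSeqColor] using h)
  intro u v huv
  let _ := σ
  rcases lt_or_gt_of_ne (Sum.inl_injective.ne huv.ne : (Sum.inl u : V ⊕ G.edgeSet) ≠ Sum.inl v)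
    with h | h
  · exact hlt u v huv h
  · exact (hlt v u huv.symm h).symm
end

section
/- Let G be a d-regular finite simple graph. If d = 5 then ch_σ^e(G) ≤ 4; if d = 4 then ch_σ^e(G) ≤ 5; and if d = 3 then ch_σ^e(G) ≤ 6. Equivalently, if d ∈ {3,4,5} then for every linear order on E(G) and every assignment to each edge e of a set L_e of 9 − d real numbers, there exists a weighting w with w(e) ∈ L_e for every edge e whose induced sequence colouring of the vertices is proper. -/
/-!
Common definitions: sequence colourings induced by an edge weighting and a linear
order on the edge set of a finite simple graph.
-/

open Finset

variable {V : Type*}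

/-!
Let `f = uv` be an edge, at position `k` in the list of edges at `u` and at position `l` in the
list at `v`. If `k < l`, the two lists hold at position `k` the edge `f` and an edge preceding it,
the *direct partner* of `f`. If `k = l`, compare the lists at the cyclically preceding position,
which is a different one since both lists have the same length `d ≥ 2`: the two edges there are
distinct, and the later one, `e` say at `x ∈ {u, v}`, has the earlier one as a *shift partner*
at `x`, because the edge following `e` cyclically at `x` is `f`, which sits at the same position at
both its ends. Every edge has at most one direct partner and one shift partner per endpoint, hence
at most three partners, all preceding it. Choosing the weights greedily along `≺` from lists of
`9 - d ≥ 4` values, every edge avoids the weights of its partners, and then adjacent vertices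
receive different sequences.
-/

theorem exists_forall_mem_and_forall_ne_of_card_lt {α β : Type*} [Fintype α] [LinearOrder α]
    [DecidableEq β] (P : α → Finset α) (hP : ∀ a, ∀ b ∈ P a, b < a) (L : α → Finset β)
    (hL : ∀ a, #(P a) < #(L a)) :
    ∃ w : α → β, (∀ a, w a ∈ L a) ∧ ∀ a, ∀ b ∈ P a, w a ≠ w b := by
  suffices ∀ s : Finset α, ∃ w : α → β, ∀ a ∈ s, w a ∈ L a ∧ ∀ b ∈ P a, b ∈ s → w a ≠ w b by
    obtain ⟨w, hw⟩ := this univ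
    exact ⟨w, fun a ↦ (hw a (mem_univ a)).1,
      fun a b hb ↦ (hw a (mem_univ a)).2 b hb (mem_univ b)⟩
  intro s
  induction s using Finset.induction_on_max with
  | empty =>
    have hne (a : α) : (L a).Nonempty := card_pos.1 ((Nat.zero_le _).trans_lt (hL a))
    exact ⟨fun a ↦ (hne a).choose, by simp⟩
  | insert a s hlt ih =>
    obtain ⟨w, hw⟩ := ih
    obtain ⟨c, hcL, hcP⟩ := exists_mem_notMem_of_card_lt_card (card_image_le.trans_lt (hL a))
    refine ⟨Function.update w a c, fun e he ↦ ?_⟩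
    rcases mem_insert.1 he with rfl | he
    · refine ⟨by simpa using hcL, fun b hb _ ↦ ?_⟩
      rw [Function.update_self, Function.update_of_ne (hP e b hb).ne]
      exact fun h ↦ hcP (h ▸ mem_image_of_mem w hb)
    · have hbs (b) (hb : b ∈ P e) (hbs : b ∈ insert a s) : b ∈ s :=
        (mem_insert.1 hbs).resolve_left ((hP e b hb).trans (hlt e he)).ne
      refine ⟨by simpa [(hlt e he).ne] using (hw e he).1, fun b hb hb' ↦ ?_⟩
      rw [Function.update_of_ne (hlt e he).ne,
        Function.update_of_ne (hlt b (hbs b hb hb')).ne]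
      exact (hw e he).2 b hb (hbs b hb hb')

theorem Nat.exists_ne_add_one_mod_eq {k n : ℕ} (hk : k < n) (hn : 2 ≤ n) :
    ∃ i < n, i ≠ k ∧ (i + 1) % n = k := by
  rcases k with _ | k
  · exact ⟨n - 1, by omega, by omega, by rw [Nat.sub_add_cancel (by omega), Nat.mod_self]⟩
  · exact ⟨k, by omega, by omega, Nat.mod_eq_of_lt hk⟩

namespace SeqColoring

-- `Sym2` carries a partial order, which would otherwise be chosen for `<` on `G.edgeSet`
-- instead of `σ`.
attribute [-instance] Sym2.instPartialOrder

variable {G : SimpleGraph V} [DecidableEq V]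

noncomputable def otherEnd (x : V) (f : G.edgeSet) : V :=
  if h : x ∈ (f : Sym2 V) then Sym2.Mem.other h else x

lemma otherEnd_eq {x y : V} {f : G.edgeSet} (hf : (f : Sym2 V) = s(x, y)) :
    otherEnd x f = y := by
  have hx : x ∈ (f : Sym2 V) := hf ▸ Sym2.mem_mk_left x y
  rw [otherEnd, dif_pos hx, ← Sym2.congr_right, Sym2.other_spec, hf]

variable [Fintype V] [DecidableRel G.Adj] [σ : LinearOrder G.edgeSet]

lemma mem_incEdges {v : V} {e : G.edgeSet} : e ∈ incEdges G σ v ↔ v ∈ (e : Sym2 V) := by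
  simp [incEdges]

lemma mem_incEdges_of_eq {x y : V} {f : G.edgeSet} (hf : (f : Sym2 V) = s(x, y)) :
    f ∈ incEdges G σ x :=
  mem_incEdges.2 (hf ▸ Sym2.mem_mk_left x y)

lemma sortedLT_incEdges (v : V) : (incEdges G σ v).SortedLT :=
  sortedLT_sort _

lemma length_incEdges (v : V) : (incEdges G σ v).length = G.degree v := by
  rw [incEdges, length_sort, ← G.card_incidenceFinset_eq_degree,
    ← card_map (Function.Embedding.subtype _)]
  congr 1
  ext x
  simp [SimpleGraph.incidenceSet, and_comm]

noncomputable def nextEdge (x : V) (e : G.edgeSet) : Option G.edgeSet :=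
  (incEdges G σ x)[((incEdges G σ x).idxOf e + 1) % (incEdges G σ x).length]?

noncomputable def directPartner (x y : V) (e : G.edgeSet) : Option G.edgeSet :=
  if (incEdges G σ x).idxOf e < (incEdges G σ y).idxOf e then
    (incEdges G σ y)[(incEdges G σ x).idxOf e]?
  else if (incEdges G σ y).idxOf e < (incEdges G σ x).idxOf e then
    (incEdges G σ x)[(incEdges G σ y).idxOf e]?
  else none

lemma directPartner_comm (x y : V) (e : G.edgeSet) :
    directPartner x y e = directPartner y x e := by
  unfold directPartner
  split_ifs <;> first | rfl | omega

noncomputable def shiftPartner (x : V) (e : G.edgeSet) : Option G.edgeSet :=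
  (nextEdge x e).bind fun f ↦
    if (incEdges G σ (otherEnd x f)).idxOf f = (incEdges G σ x).idxOf f then
      (incEdges G σ (otherEnd x f))[(incEdges G σ x).idxOf e]?
    else none

lemma shiftPartner_eq {x y : V} {e f : G.edgeSet} (hnext : nextEdge x e = some f)
    (hf : (f : Sym2 V) = s(x, y))
    (hbal : (incEdges G σ y).idxOf f = (incEdges G σ x).idxOf f) :
    shiftPartner x e = (incEdges G σ y)[(incEdges G σ x).idxOf e]? := by
  rw [shiftPartner, hnext, Option.bind_some, otherEnd_eq hf, if_pos hbal]

noncomputable def partners (e : G.edgeSet) : Finset G.edgeSet :=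
  (Sym2.lift ⟨fun x y ↦ (directPartner x y e).toFinset ∪ (shiftPartner x e).toFinset ∪
      (shiftPartner y e).toFinset,
    fun x y ↦ by dsimp only; rw [directPartner_comm, union_right_comm]⟩
    (e : Sym2 V)).filter (· < e)

lemma partners_eq {e : G.edgeSet} {x y : V} (he : (e : Sym2 V) = s(x, y)) :
    partners e = ((directPartner x y e).toFinset ∪ (shiftPartner x e).toFinset ∪
      (shiftPartner y e).toFinset).filter (· < e) := by
  rw [partners, he, Sym2.lift_mk]

lemma lt_of_mem_partners {e b : G.edgeSet} (h : b ∈ partners e) : b < e :=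
  (mem_filter.1 h).2

lemma card_partners_le (e : G.edgeSet) : #(partners e) ≤ 3 := by
  have card_toFinset_le (o : Option G.edgeSet) : #o.toFinset ≤ 1 := by cases o <;> simp
  obtain ⟨⟨x, y⟩, hxy⟩ := Quot.exists_rep (e : Sym2 V)
  rw [partners_eq hxy.symm]
  refine (card_filter_le _ _).trans ((card_union_le _ _).trans ?_)
  have := card_union_le (directPartner x y e).toFinset (shiftPartner x e).toFinset
  have := card_toFinset_le (directPartner x y e)
  have := card_toFinset_le (shiftPartner x e)
  have := card_toFinset_le (shiftPartner y e)
  omega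

lemma mem_partners_of_directPartner {x y : V} {e b : G.edgeSet} (he : (e : Sym2 V) = s(x, y))
    (hb : directPartner x y e = some b) (hlt : b < e) : b ∈ partners e := by
  simp [partners_eq he, hb, hlt]

lemma mem_partners_of_shiftPartner {x : V} {e b : G.edgeSet} (hx : x ∈ (e : Sym2 V))
    (hb : shiftPartner x e = some b) (hlt : b < e) : b ∈ partners e := by
  simp [partners_eq (Sym2.other_spec hx).symm, hb, hlt]

variable (G) in
def HasAlignedPartners (u v : V) : Prop :=
  ∃ (i : ℕ) (hu : i < (incEdges G σ u).length) (hv : i < (incEdges G σ v).length),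
    (incEdges G σ v)[i] ∈ partners (incEdges G σ u)[i] ∨
      (incEdges G σ u)[i] ∈ partners (incEdges G σ v)[i]

lemma HasAlignedPartners.symm {u v : V} (h : HasAlignedPartners G u v) :
    HasAlignedPartners G v u :=
  let ⟨i, hu, hv, hp⟩ := h
  ⟨i, hv, hu, hp.symm⟩

lemma hasAlignedPartners_of_idxOf_lt {u v : V} {f : G.edgeSet} (hf : (f : Sym2 V) = s(u, v))
    (hlt : (incEdges G σ u).idxOf f < (incEdges G σ v).idxOf f) : HasAlignedPartners G u v := by
  have hkv := List.idxOf_lt_length_of_mem (mem_incEdges_of_eq (σ := σ) (hf.trans Sym2.eq_swap))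
  have hv : (incEdges G σ u).idxOf f < (incEdges G σ v).length := hlt.trans hkv
  refine ⟨_, List.idxOf_lt_length_of_mem (mem_incEdges_of_eq hf), hv, Or.inl ?_⟩
  rw [List.getElem_idxOf]
  refine mem_partners_of_directPartner hf ?_ ?_
  · rw [directPartner, if_pos hlt, List.getElem?_eq_getElem hv]
  · have := ((sortedLT_incEdges v).getElem_lt_getElem_iff (hi := hv) (hj := hkv)).2 hlt
    rwa [List.getElem_idxOf] at this

lemma getElem_mem_partners_of_idxOf_eq {x y : V} {f : G.edgeSet} (hf : (f : Sym2 V) = s(x, y))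
    (hbal : (incEdges G σ y).idxOf f = (incEdges G σ x).idxOf f) {i : ℕ}
    (hx : i < (incEdges G σ x).length) (hy : i < (incEdges G σ y).length)
    (hnext : (i + 1) % (incEdges G σ x).length = (incEdges G σ x).idxOf f)
    (hlt : (incEdges G σ y)[i] < (incEdges G σ x)[i]) :
    (incEdges G σ y)[i] ∈ partners (incEdges G σ x)[i] := by
  have hidx := (sortedLT_incEdges x).nodup.idxOf_getElem i hx
  have hnext' : nextEdge x (incEdges G σ x)[i] = some f := by
    rw [nextEdge, hidx, hnext,
      List.getElem?_eq_getElem (List.idxOf_lt_length_of_mem (mem_incEdges_of_eq hf)),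
      List.getElem_idxOf]
  refine mem_partners_of_shiftPartner (mem_incEdges.1 (List.getElem_mem hx)) ?_ hlt
  rw [shiftPartner_eq hnext' hf hbal, hidx, List.getElem?_eq_getElem hy]

lemma hasAlignedPartners_of_idxOf_eq {u v : V} {f : G.edgeSet} (hf : (f : Sym2 V) = s(u, v))
    (hbal : (incEdges G σ u).idxOf f = (incEdges G σ v).idxOf f)
    (hlen : (incEdges G σ u).length = (incEdges G σ v).length)
    (h2 : 2 ≤ (incEdges G σ u).length) : HasAlignedPartners G u v := by
  have hne : u ≠ v := (G.mem_edgeSet.1 (hf ▸ f.2)).ne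
  obtain ⟨i, hiu, hik, hnext⟩ :=
    Nat.exists_ne_add_one_mod_eq (List.idxOf_lt_length_of_mem (mem_incEdges_of_eq hf)) h2
  have hiv : i < (incEdges G σ v).length := hlen ▸ hiu
  refine ⟨i, hiu, hiv, ?_⟩
  have hab : (incEdges G σ u)[i] ≠ (incEdges G σ v)[i] := by
    intro h
    have hu := mem_incEdges.1 (List.getElem_mem hiu)
    have hv := mem_incEdges.1 (h ▸ List.getElem_mem hiv)
    have hf' : (incEdges G σ u)[i] = f :=
      Subtype.ext (((Sym2.mem_and_mem_iff hne).1 ⟨hu, hv⟩).trans hf.symm)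
    have hidx := (sortedLT_incEdges u).nodup.idxOf_getElem i hiu
    rw [hf'] at hidx
    exact hik hidx.symm
  rcases lt_or_gt_of_ne hab with hlt | hlt
  · refine Or.inr (getElem_mem_partners_of_idxOf_eq (hf.trans Sym2.eq_swap) hbal hiv hiu ?_ hlt)
    rwa [← hlen, ← hbal]
  · exact Or.inl (getElem_mem_partners_of_idxOf_eq hf hbal.symm hiu hiv hnext hlt)

lemma hasAlignedPartners_of_adj {u v : V} (h : G.Adj u v) (hdeg : G.degree u = G.degree v)
    (h2 : 2 ≤ G.degree u) : HasAlignedPartners G u v := by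
  obtain ⟨f, hf⟩ : ∃ f : G.edgeSet, (f : Sym2 V) = s(u, v) := ⟨⟨s(u, v), h⟩, rfl⟩
  simp only [← length_incEdges (σ := σ)] at hdeg h2
  clear h
  wlog hle : (incEdges G σ u).idxOf f ≤ (incEdges G σ v).idxOf f generalizing u v
  · exact (this (hf.trans Sym2.eq_swap) hdeg.symm (hdeg ▸ h2) (by omega)).symm
  rcases hle.lt_or_eq with hlt | hbal
  · exact hasAlignedPartners_of_idxOf_lt hf hlt
  · exact hasAlignedPartners_of_idxOf_eq hf hbal hdeg h2

lemma seqColor_ne_of_hasAlignedPartners {β : Type*} {w : G.edgeSet → β}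
    (hw : ∀ a, ∀ b ∈ partners a, w a ≠ w b) {u v : V} (h : HasAlignedPartners G u v) :
    seqColor G σ w u ≠ seqColor G σ w v := by
  obtain ⟨i, hu, hv, hp⟩ := h
  intro heq
  have hw_eq : w (incEdges G σ u)[i] = w (incEdges G σ v)[i] := by
    simpa [seqColor, hu, hv] using congrArg (·[i]?) heq
  rcases hp with hp | hp
  · exact hw _ _ hp hw_eq
  · exact hw _ _ hp hw_eq.symm

end SeqColoring

/-- If `G` is `d`-regular with `d ∈ {3,4,5}`, then `ch_σ^e(G) ≤ 9 − d`; that is,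
`ch_σ^e(G) ≤ 4` for `d = 5`, `ch_σ^e(G) ≤ 5` for `d = 4`, and `ch_σ^e(G) ≤ 6` for
`d = 3`. -/
theorem stmt_8 [Fintype V] [DecidableEq V] (G : SimpleGraph V) [DecidableRel G.Adj]
    (d : ℕ) (hd : d ∈ ({3, 4, 5} : Set ℕ)) (hreg : G.IsRegularOfDegree d)
    (σ : LinearOrder G.edgeSet)
    (L : G.edgeSet → Finset ℝ) (hL : ∀ e, (L e).card = 9 - d) :
    ∃ w : G.edgeSet → ℝ, (∀ e, w e ∈ L e) ∧ ProperSeq G σ w := by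
  let _ := σ
  have hd' : 3 ≤ d ∧ d ≤ 5 := by rcases hd with rfl | rfl | rfl <;> norm_num
  obtain ⟨w, hwL, hw⟩ := exists_forall_mem_and_forall_ne_of_card_lt SeqColoring.partners
    (fun _ _ ↦ SeqColoring.lt_of_mem_partners) L
    (fun e ↦ by have := SeqColoring.card_partners_le e; have := hL e; omega)
  refine ⟨w, hwL, fun u v huv ↦ SeqColoring.seqColor_ne_of_hasAlignedPartners hw ?_⟩
  exact SeqColoring.hasAlignedPartners_of_adj huv (by rw [hreg u, hreg v]) (by rw [hreg u]; omega)
end
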